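/- Let T > 0, d ≥ 1 and α ∈ [0,1). There exists a constant c > 0 such that for every continuously differentiable x:[0,T]→ℝᵈ whose derivative is α-Hölder continuous, ‖ẋ‖_∞^{1+α} ≤ c · ‖x‖_∞^{α} · ‖x‖_{C^{1+α}}. -/

import Mathlib

/-- The `C^{1+α}` norm of a vector-valued function on `[0,T]`:
`sup ‖x‖ + sup ‖x'‖ + sup_{s ≠ t} ‖x'(t) - x'(s)‖ / |t-s|^α`. -/
noncomputable def C1alphaNorm {E : Type*} [NormedAddCommGroup E] [NormedSpace ℝ E]
    (T α : ℝ) (x : ℝ → E) : ℝ :=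
  (⨆ t : Set.Icc (0:ℝ) T, ‖x t‖) + (⨆ t : Set.Icc (0:ℝ) T, ‖deriv x t‖) +
    ⨆ p : Set.Icc (0:ℝ) T × Set.Icc (0:ℝ) T,
      if (p.1 : ℝ) = (p.2 : ℝ) then 0
      else ‖deriv x p.1 - deriv x p.2‖ / |(p.1 : ℝ) - (p.2 : ℝ)| ^ α

/-!
Let `M₀ = sup ‖x‖`, `M₁ = sup ‖ẋ‖` and `H` the Hölder seminorm of `ẋ` on `[0, T]`. For
`h ∈ (0, T]` and any `t₀`, pick an interval of length `h` in `[0, T]` containing `t₀`; on it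
`ẋ` stays within `H h^α` of `ẋ(t₀)`, so the mean value inequality gives
`h ‖ẋ(t₀)‖ ≤ 2 M₀ + H h^{1+α}`, i.e. `M₁ ≤ 2 M₀ / h + H h^α`. If `H T^α ≤ M₁ / 2`, the choice
`h = T` gives `M₁ ≤ 4 M₀ / T`; otherwise the `h` with `H h^α = M₁ / 2` lies in `(0, T]` and gives
`M₁^{1+α} ≤ 2 · 4^α M₀^α H`.
-/

open Set

variable {E : Type*} [NormedAddCommGroup E]

theorem sub_mul_norm_le_of_norm_deriv_sub_le [NormedSpace ℝ E] {f f' : ℝ → E} {a b δ : ℝ}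
    (v : E) (hab : a ≤ b)
    (hf : ∀ t ∈ Icc a b, HasDerivWithinAt f (f' t) (Icc a b) t)
    (hδ : ∀ t ∈ Ico a b, ‖f' t - v‖ ≤ δ) :
    (b - a) * ‖v‖ ≤ ‖f b - f a‖ + δ * (b - a) := by
  have hg : ∀ t ∈ Icc a b,
      HasDerivWithinAt (fun s => f s - s • v) (f' t - v) (Icc a b) t := fun t ht => by
    have := (hf t ht).sub ((hasDerivWithinAt_id t _).smul_const v)
    rwa [one_smul] at this
  have hmvt := norm_image_sub_le_of_norm_deriv_le_segment' hg hδ b (right_mem_Icc.2 hab)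
  calc (b - a) * ‖v‖ = ‖(b - a) • v‖ := by
        rw [norm_smul, Real.norm_of_nonneg (sub_nonneg.2 hab)]
    _ = ‖(f b - f a) - (f b - b • v - (f a - a • v))‖ := by
        congr 1; simp only [sub_smul]; abel
    _ ≤ ‖f b - f a‖ + ‖f b - b • v - (f a - a • v)‖ := norm_sub_le _ _
    _ ≤ ‖f b - f a‖ + δ * (b - a) := by gcongr

theorem norm_le_iSup_Icc {f : ℝ → E} (hf : Continuous f) {a b t : ℝ} (ht : t ∈ Icc a b) :
    ‖f t‖ ≤ ⨆ s : Icc a b, ‖f s‖ :=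
  le_ciSup (isCompact_range (hf.comp continuous_subtype_val).norm).bddAbove ⟨t, ht⟩

noncomputable def holderSeminorm (T α : ℝ) (g : ℝ → E) : ℝ :=
  ⨆ p : Icc (0:ℝ) T × Icc (0:ℝ) T,
    if (p.1 : ℝ) = (p.2 : ℝ) then 0 else ‖g p.1 - g p.2‖ / |(p.1 : ℝ) - (p.2 : ℝ)| ^ α

theorem C1alphaNorm_eq [NormedSpace ℝ E] (T α : ℝ) (x : ℝ → E) :
    C1alphaNorm T α x = (⨆ t : Icc (0:ℝ) T, ‖x t‖) + (⨆ t : Icc (0:ℝ) T, ‖deriv x t‖) +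
      holderSeminorm T α (deriv x) := rfl

theorem holderSeminorm_nonneg (T α : ℝ) (g : ℝ → E) : 0 ≤ holderSeminorm T α g :=
  Real.iSup_nonneg fun p => by split_ifs <;> positivity

theorem HolderOnWith.norm_sub_le_holderSeminorm_mul {g : ℝ → E} {K r : NNReal} {T : ℝ}
    (hg : HolderOnWith K r g (Icc 0 T)) {s u : ℝ} (hs : s ∈ Icc 0 T) (hu : u ∈ Icc 0 T) :
    ‖g s - g u‖ ≤ holderSeminorm T r g * |s - u| ^ (r : ℝ) := by
  rcases eq_or_ne s u with rfl | hsu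
  · rw [sub_self, norm_zero]
    exact mul_nonneg (holderSeminorm_nonneg _ _ _) (Real.rpow_nonneg (abs_nonneg _) _)
  have hpos : 0 < |s - u| ^ (r : ℝ) := Real.rpow_pos_of_pos (abs_pos.2 (sub_ne_zero.2 hsu)) _
  have hbdd : BddAbove (range fun p : Icc (0:ℝ) T × Icc (0:ℝ) T =>
      if (p.1 : ℝ) = (p.2 : ℝ) then 0 else ‖g p.1 - g p.2‖ / |(p.1 : ℝ) - (p.2 : ℝ)| ^ (r : ℝ)) := by
    refine ⟨K, forall_mem_range.2 fun p => ?_⟩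
    split_ifs with hp
    · exact K.coe_nonneg
    · rw [div_le_iff₀ (Real.rpow_pos_of_pos (abs_pos.2 (sub_ne_zero.2 hp)) _)]
      simpa only [dist_eq_norm, Real.norm_eq_abs] using hg.dist_le p.1.2 p.2.2
  have := le_ciSup hbdd (⟨⟨s, hs⟩, ⟨u, hu⟩⟩ : Icc (0:ℝ) T × Icc (0:ℝ) T)
  rwa [if_neg hsu, div_le_iff₀ hpos] at this

theorem norm_deriv_le_of_holderOnWith [NormedSpace ℝ E] {f : ℝ → E} {K r : NNReal} {T h t₀ : ℝ}
    (hf : Differentiable ℝ f) (hK : HolderOnWith K r (deriv f) (Icc 0 T)) (hh : 0 < h)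
    (hhT : h ≤ T) (ht₀ : t₀ ∈ Icc 0 T) :
    ‖deriv f t₀‖ ≤
      2 * (⨆ t : Icc (0:ℝ) T, ‖f t‖) / h + holderSeminorm T r (deriv f) * h ^ (r : ℝ) := by
  set a := min t₀ (T - h)
  have hI : Icc a (a + h) ⊆ Icc 0 T := Icc_subset_Icc (le_min ht₀.1 (by linarith))
    (by linarith [min_le_right t₀ (T - h)])
  have ht₀I : t₀ ∈ Icc a (a + h) := ⟨min_le_left _ _, by
    rcases min_choice t₀ (T - h) with e | e <;> simp only [a, e] <;> linarith [ht₀.2]⟩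
  have hah : a ≤ a + h := by linarith
  have hmvt := sub_mul_norm_le_of_norm_deriv_sub_le (deriv f t₀) hah
    (fun t _ => (hf t).hasDerivAt.hasDerivWithinAt)
    (δ := holderSeminorm T r (deriv f) * h ^ (r : ℝ)) fun t ht => by
      refine (hK.norm_sub_le_holderSeminorm_mul (hI (Ico_subset_Icc_self ht)) ht₀).trans ?_
      gcongr
      · exact holderSeminorm_nonneg _ _ _
      rw [abs_sub_le_iff]
      constructor <;> linarith [ht.1, ht.2, ht₀I.1, ht₀I.2]
  have hend : ‖f (a + h) - f a‖ ≤ 2 * ⨆ t : Icc (0:ℝ) T, ‖f t‖ := by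
    linarith [norm_sub_le (f (a + h)) (f a),
      norm_le_iSup_Icc hf.continuous (hI (right_mem_Icc.2 hah)),
      norm_le_iSup_Icc hf.continuous (hI (left_mem_Icc.2 hah))]
  rw [add_sub_cancel_left] at hmvt
  rw [div_add' _ _ _ hh.ne', le_div_iff₀ hh]
  linarith

theorem iSup_norm_deriv_le_of_holderOnWith [NormedSpace ℝ E] {f : ℝ → E} {K r : NNReal} {T h : ℝ}
    (hf : Differentiable ℝ f) (hK : HolderOnWith K r (deriv f) (Icc 0 T)) (hh : 0 < h)
    (hhT : h ≤ T) :
    ⨆ t : Icc (0:ℝ) T, ‖deriv f t‖ ≤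
      2 * (⨆ t : Icc (0:ℝ) T, ‖f t‖) / h + holderSeminorm T r (deriv f) * h ^ (r : ℝ) :=
  have : Nonempty (Icc (0:ℝ) T) := ⟨⟨0, le_rfl, hh.le.trans hhT⟩⟩
  ciSup_le fun t => norm_deriv_le_of_holderOnWith hf hK hh hhT t.2

theorem rpow_one_add_le_of_le_two_div_add_balanced {M₀ M₁ H α h : ℝ} (hα : 0 < α)
    (hM₀ : 0 ≤ M₀) (hM₁ : 0 < M₁) (hH : 0 < H) (hh : 0 < h) (hbal : H * h ^ α = M₁ / 2)
    (hbound : M₁ ≤ 2 * M₀ / h + H * h ^ α) :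
    M₁ ^ (1 + α) ≤ 2 * 4 ^ α * M₀ ^ α * H := by
  have hh4 : h ≤ 4 * M₀ / M₁ := by
    have : M₁ / 2 ≤ 2 * M₀ / h := by linarith
    rw [le_div_iff₀ hh] at this
    rw [le_div_iff₀ hM₁]
    linarith
  have hratio : M₁ / (2 * H) ≤ 4 ^ α * M₀ ^ α / M₁ ^ α := by
    have : h ^ α = M₁ / (2 * H) := by field_simp; linarith
    rw [← this, ← Real.mul_rpow (by norm_num) hM₀, ← Real.div_rpow (by positivity) hM₁.le]
    exact Real.rpow_le_rpow hh.le hh4 hα.le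
  rw [div_le_div_iff₀ (by positivity) (by positivity)] at hratio
  rw [Real.rpow_add hM₁, Real.rpow_one]
  linarith

theorem rpow_one_add_le_of_forall_le {T M₀ M₁ H α : ℝ} (hT : 0 < T) (hα : 0 ≤ α) (hM₀ : 0 ≤ M₀)
    (hM₁ : 0 ≤ M₁) (hH : 0 ≤ H) (hbound : ∀ h, 0 < h → h ≤ T → M₁ ≤ 2 * M₀ / h + H * h ^ α) :
    M₁ ^ (1 + α) ≤ (4 / T) ^ α * M₀ ^ α * M₁ + 2 * 4 ^ α * M₀ ^ α * H := by
  have hleft : 0 ≤ (4 / T) ^ α * M₀ ^ α * M₁ := by positivity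
  have hright : 0 ≤ 2 * 4 ^ α * M₀ ^ α * H := by positivity
  rcases le_or_gt (H * T ^ α) (M₁ / 2) with hsmall | hlarge
  · have hM₁T : M₁ ≤ 4 / T * M₀ := by
      have := hbound T hT le_rfl
      calc M₁ ≤ 2 * (2 * M₀ / T) := by linarith
        _ = 4 / T * M₀ := by ring
    have hM₁α : M₁ ^ α ≤ (4 / T) ^ α * M₀ ^ α := by
      rw [← Real.mul_rpow (by positivity) hM₀]
      exact Real.rpow_le_rpow hM₁ hM₁T hα
    rw [Real.rpow_add' hM₁ (by positivity), Real.rpow_one]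
    nlinarith
  rcases hM₁.eq_or_lt with rfl | hM₁
  · rw [Real.zero_rpow (by positivity)]
    positivity
  have hHpos : 0 < H := by
    by_contra! hH0
    nlinarith [Real.rpow_nonneg hT.le α]
  rcases hα.eq_or_lt with rfl | hα
  · simp only [add_zero, Real.rpow_one, Real.rpow_zero] at hlarge ⊢
    linarith
  -- the scale at which the two terms of the bound balance
  set h := (M₁ / (2 * H)) ^ α⁻¹
  have hq : 0 < M₁ / (2 * H) := by positivity
  have hh : 0 < h := Real.rpow_pos_of_pos hq _
  have hhα : h ^ α = M₁ / (2 * H) := Real.rpow_inv_rpow hq.le hα.ne'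
  have hhT : h ≤ T := by
    rw [← Real.rpow_le_rpow_iff hh.le hT.le hα, hhα, div_le_iff₀ (by positivity)]
    linarith
  have hbal : H * h ^ α = M₁ / 2 := by rw [hhα]; field_simp
  linarith [rpow_one_add_le_of_le_two_div_add_balanced hα hM₀ hM₁ hHpos hh hbal (hbound h hh hhT)]

theorem stmt8_general (T : ℝ) (hT : 0 < T) (d : ℕ)
    (α : ℝ) (hα0 : 0 ≤ α) :
    ∃ c > 0, ∀ x : ℝ → EuclideanSpace ℝ (Fin d), ContDiff ℝ 1 x →
      (∃ K : NNReal, HolderOnWith K ⟨α, hα0⟩ (deriv x) (Set.Icc 0 T)) →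
      (⨆ t : Set.Icc (0:ℝ) T, ‖deriv x t‖) ^ (1 + α)
        ≤ c * (⨆ t : Set.Icc (0:ℝ) T, ‖x t‖) ^ α * C1alphaNorm T α x := by
  refine ⟨(4 / T) ^ α + 2 * 4 ^ α, by positivity, fun x hx ⟨K, hK⟩ => ?_⟩
  replace hx : Differentiable ℝ x := hx.differentiable one_ne_zero
  set M₀ := ⨆ t : Icc (0:ℝ) T, ‖x t‖
  set M₁ := ⨆ t : Icc (0:ℝ) T, ‖deriv x t‖
  set H := holderSeminorm T α (deriv x)
  have hM₀ : 0 ≤ M₀ := Real.iSup_nonneg fun _ => norm_nonneg _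
  have hM₁ : 0 ≤ M₁ := Real.iSup_nonneg fun _ => norm_nonneg _
  have hH : 0 ≤ H := holderSeminorm_nonneg _ _ _
  have hbound (h : ℝ) (hh : 0 < h) (hhT : h ≤ T) : M₁ ≤ 2 * M₀ / h + H * h ^ α :=
    (iSup_norm_deriv_le_of_holderOnWith hx hK hh hhT :)
  calc M₁ ^ (1 + α) ≤ (4 / T) ^ α * M₀ ^ α * M₁ + 2 * 4 ^ α * M₀ ^ α * H :=
        rpow_one_add_le_of_forall_le hT hα0 hM₀ hM₁ hH hbound
    _ ≤ (4 / T) ^ α * M₀ ^ α * (M₀ + M₁ + H) + 2 * 4 ^ α * M₀ ^ α * (M₀ + M₁ + H) := by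
        gcongr <;> linarith
    _ = _ := by rw [C1alphaNorm_eq]; ring

/-- Interpolation inequality: `‖ẋ‖_∞^{1+α} ≤ c ‖x‖_∞^α ‖x‖_{C^{1+α}}` for all
`C^{1+α}` functions `x : [0,T] → ℝᵈ`. -/
theorem stmt8 (T : ℝ) (hT : 0 < T) (d : ℕ) (hd : 1 ≤ d)
    (α : ℝ) (hα0 : 0 ≤ α) (hα1 : α < 1) :
    ∃ c > 0, ∀ x : ℝ → EuclideanSpace ℝ (Fin d), ContDiff ℝ 1 x →
      (∃ K : NNReal, HolderOnWith K ⟨α, hα0⟩ (deriv x) (Set.Icc 0 T)) →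
      (⨆ t : Set.Icc (0:ℝ) T, ‖deriv x t‖) ^ (1 + α)
        ≤ c * (⨆ t : Set.Icc (0:ℝ) T, ‖x t‖) ^ α * C1alphaNorm T α x :=
  stmt8_general T hT d α hα0
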